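/- arXiv:2306.07620 — 4 statements merged into one kernel-verified Lean document; each statement's English description precedes it below -/
import Mathlib

section
/- Let a < b, let M ≥ 1, and let α_1, …, α_M : ℝ → ℝ be continuous basis functions. Suppose x_k : ℝ → ℝ satisfies exactly x_k(t) = Σ_{j=1}^{M} a_j α_j(t) on [a,b] for real coefficients a_1, …, a_M, and suppose x_{k−1} : ℝ → ℝ is continuously differentiable on [a,b], g_{k−1} : ℝ → ℝ is continuous, and ẋ_{k−1}(t) = x_k(t) + g_{k−1}(t) on [a,b]. Let φ_1, …, φ_M be modulating functions of order at least 1 on [a,b] such that the M × M matrix Θ with entries Θ_{ij} = ∫_a^b φ_i(t) α_j(t) dt is invertible. Then the coefficient vector is uniquely determined by the closed-form solution (a_1, …, a_M)^T = −Θ^{−1} v, where v_i = ∫_a^b φ_i'(t) x_{k−1}(t) dt + ∫_a^b φ_i(t) g_{k−1}(t) dt. -/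
/-!
Multiplying `ẋ_{k-1} = x_k + g_{k-1}` by a modulating function `φ_i` and integrating over `[a,b]`,
integration by parts moves the derivative onto `φ_i`; the boundary term vanishes because
`φ_i(a) = φ_i(b) = 0`. Hence `∫ φ_i' x_{k-1} + ∫ φ_i g_{k-1} = -∫ φ_i x_k`, and by linearity in the
coefficient vector `c` the right-hand side is `-(Θ c)_i`. So `v = -Θ c`, which is solved by
inverting `Θ`.
-/

/-- A modulating function of order `k` on `[a,b]`. -/
def IsModulatingOn (φ : ℝ → ℝ) (k : ℕ) (a b : ℝ) : Prop :=
  (∃ t ∈ Set.Icc a b, φ t ≠ 0) ∧ ContDiffOn ℝ k φ (Set.Icc a b) ∧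
    ∀ i < k, iteratedDerivWithin i φ (Set.Icc a b) a = 0 ∧
      iteratedDerivWithin i φ (Set.Icc a b) b = 0

open Set intervalIntegral

variable {a b : ℝ}

theorem integral_derivWithin_mul_eq_neg_of_eq_zero {φ x : ℝ → ℝ} (hab : a < b)
    (hφ : ContDiffOn ℝ 1 φ (Icc a b)) (hx : ContDiffOn ℝ 1 x (Icc a b))
    (ha : φ a = 0) (hb : φ b = 0) :
    ∫ t in a..b, derivWithin φ (Icc a b) t * x t =
      -∫ t in a..b, φ t * derivWithin x (Icc a b) t := by
  have hud : UniqueDiffOn ℝ (Icc a b) := uniqueDiffOn_Icc hab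
  have huIcc : uIcc a b = Icc a b := uIcc_of_le hab.le
  have hderiv {f : ℝ → ℝ} (hf : ContDiffOn ℝ 1 f (Icc a b)) :
      ∀ t ∈ uIcc a b, HasDerivWithinAt f (derivWithin f (Icc a b) t) (uIcc a b) t := by
    rw [huIcc]
    exact fun t ht => (hf.differentiableOn one_ne_zero t ht).hasDerivWithinAt
  have hint {f : ℝ → ℝ} (hf : ContDiffOn ℝ 1 f (Icc a b)) :
      IntervalIntegrable (derivWithin f (Icc a b)) MeasureTheory.volume a b :=
    (hf.continuousOn_derivWithin hud le_rfl).intervalIntegrable_of_Icc hab.le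
  rw [integral_mul_deriv_eq_deriv_mul_of_hasDerivWithinAt (hderiv hφ) (hderiv hx) (hint hφ)
    (hint hx), ha, hb]
  ring

namespace IsModulatingOn

variable {φ : ℝ → ℝ} {k : ℕ}

theorem contDiffOn_one (hφ : IsModulatingOn φ k a b) (hk : 1 ≤ k) :
    ContDiffOn ℝ 1 φ (Icc a b) :=
  hφ.2.1.of_le (by exact_mod_cast hk)

theorem apply_left_eq_zero (hφ : IsModulatingOn φ k a b) (hk : 1 ≤ k) : φ a = 0 := by
  simpa using (hφ.2.2 0 hk).1

theorem apply_right_eq_zero (hφ : IsModulatingOn φ k a b) (hk : 1 ≤ k) : φ b = 0 := by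
  simpa using (hφ.2.2 0 hk).2

theorem integral_derivWithin_mul_add_integral_mul (hφ : IsModulatingOn φ k a b) (hk : 1 ≤ k)
    (hab : a < b) {x y g : ℝ → ℝ} (hx : ContDiffOn ℝ 1 x (Icc a b))
    (hy : ContinuousOn y (Icc a b)) (hg : ContinuousOn g (Icc a b))
    (hxyg : ∀ t ∈ Icc a b, derivWithin x (Icc a b) t = y t + g t) :
    (∫ t in a..b, derivWithin φ (Icc a b) t * x t) + ∫ t in a..b, φ t * g t =
      -∫ t in a..b, φ t * y t := by
  have hφc : ContinuousOn φ (Icc a b) := (hφ.contDiffOn_one hk).continuousOn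
  have hsplit : ∫ t in a..b, φ t * derivWithin x (Icc a b) t =
      (∫ t in a..b, φ t * y t) + ∫ t in a..b, φ t * g t := by
    rw [← integral_add (f := fun t => φ t * y t) (g := fun t => φ t * g t)
      ((hφc.mul hy).intervalIntegrable_of_Icc hab.le)
      ((hφc.mul hg).intervalIntegrable_of_Icc hab.le)]
    refine integral_congr fun t ht => ?_
    rw [uIcc_of_le hab.le] at ht
    simp only [hxyg t ht, mul_add]
  rw [integral_derivWithin_mul_eq_neg_of_eq_zero hab (hφ.contDiffOn_one hk) hx
    (hφ.apply_left_eq_zero hk) (hφ.apply_right_eq_zero hk), hsplit]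
  ring

end IsModulatingOn

theorem mulVec_integral_mul_eq_integral_mul_of_eq_sum {M : ℕ} (hab : a ≤ b)
    {φ α : Fin M → ℝ → ℝ} (hφ : ∀ i, ContinuousOn (φ i) (Icc a b))
    (hα : ∀ j, ContinuousOn (α j) (Icc a b)) (c : Fin M → ℝ) {y : ℝ → ℝ}
    (hy : ∀ t ∈ Icc a b, y t = ∑ j, c j * α j t) :
    (Matrix.of fun i j => ∫ t in a..b, φ i t * α j t).mulVec c =
      fun i => ∫ t in a..b, φ i t * y t := by
  funext i
  have hcongr : ∫ t in a..b, φ i t * y t = ∫ t in a..b, ∑ j, c j * (φ i t * α j t) := by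
    refine integral_congr fun t ht => ?_
    rw [uIcc_of_le hab] at ht
    simp only [hy t ht, Finset.mul_sum, mul_left_comm]
  rw [hcongr, integral_finsetSum (f := fun j t => c j * (φ i t * α j t)) fun j _ =>
    (((hφ i).mul (hα j)).intervalIntegrable_of_Icc hab).const_mul (c j)]
  simp only [Matrix.mulVec, dotProduct, Matrix.of_apply, integral_const_mul, mul_comm]

theorem state_coefficients_closed_form_general
    (a b : ℝ) (hab : a < b) (M : ℕ)
    (α : Fin M → ℝ → ℝ) (hα : ∀ j, Continuous (α j))
    (xk xkm1 gkm1 : ℝ → ℝ) (coef : Fin M → ℝ)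
    (hrep : ∀ t ∈ Set.Icc a b, xk t = ∑ j, coef j * α j t)
    (hx : ContDiffOn ℝ 1 xkm1 (Set.Icc a b)) (hg : Continuous gkm1)
    (hsys : ∀ t ∈ Set.Icc a b,
      derivWithin xkm1 (Set.Icc a b) t = xk t + gkm1 t)
    (φ : Fin M → ℝ → ℝ) (l : Fin M → ℕ) (hl : ∀ i, 1 ≤ l i)
    (hφ : ∀ i, IsModulatingOn (φ i) (l i) a b)
    (Θ : Matrix (Fin M) (Fin M) ℝ)
    (hΘ : Θ = Matrix.of fun i j => ∫ t in a..b, φ i t * α j t)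
    (hinv : IsUnit Θ) :
    coef = -(Θ⁻¹.mulVec fun i =>
      (∫ t in a..b, derivWithin (φ i) (Set.Icc a b) t * xkm1 t) +
        ∫ t in a..b, φ i t * gkm1 t) := by
  have hxk : ContinuousOn xk (Icc a b) :=
    (continuous_finsetSum _ fun j _ => continuous_const.mul (hα j)).continuousOn.congr hrep
  have hΘcoef : Θ.mulVec coef = fun i => ∫ t in a..b, φ i t * xk t := by
    rw [hΘ]
    exact mulVec_integral_mul_eq_integral_mul_of_eq_sum hab.le
      (fun i => ((hφ i).contDiffOn_one (hl i)).continuousOn) (fun j => (hα j).continuousOn)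
      coef hrep
  have hv : (fun i => (∫ t in a..b, derivWithin (φ i) (Icc a b) t * xkm1 t) +
      ∫ t in a..b, φ i t * gkm1 t) = Θ.mulVec (-coef) := by
    rw [Matrix.mulVec_neg, hΘcoef]
    funext i
    exact (hφ i).integral_derivWithin_mul_add_integral_mul (hl i) hab hx hxk hg.continuousOn hsys
  obtain ⟨_⟩ := hinv.nonempty_invertible
  rw [Matrix.inv_mulVec_eq_vec hv, neg_neg]

/-- closed-form solution for the coefficients of the basis decomposition of
the state `x_k`, `(a_1,…,a_M)ᵀ = −Θ⁻¹ v`, from the one-step modulated equations. -/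
theorem state_coefficients_closed_form
    (a b : ℝ) (hab : a < b) (M : ℕ) (hM : 1 ≤ M)
    (α : Fin M → ℝ → ℝ) (hα : ∀ j, Continuous (α j))
    (xk xkm1 gkm1 : ℝ → ℝ) (coef : Fin M → ℝ)
    (hrep : ∀ t ∈ Set.Icc a b, xk t = ∑ j, coef j * α j t)
    (hx : ContDiffOn ℝ 1 xkm1 (Set.Icc a b)) (hg : Continuous gkm1)
    (hsys : ∀ t ∈ Set.Icc a b,
      derivWithin xkm1 (Set.Icc a b) t = xk t + gkm1 t)
    (φ : Fin M → ℝ → ℝ) (l : Fin M → ℕ) (hl : ∀ i, 1 ≤ l i)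
    (hφ : ∀ i, IsModulatingOn (φ i) (l i) a b)
    (Θ : Matrix (Fin M) (Fin M) ℝ)
    (hΘ : Θ = Matrix.of fun i j => ∫ t in a..b, φ i t * α j t)
    (hinv : IsUnit Θ) :
    coef = -(Θ⁻¹.mulVec fun i =>
      (∫ t in a..b, derivWithin (φ i) (Set.Icc a b) t * xkm1 t) +
        ∫ t in a..b, φ i t * gkm1 t) :=
  state_coefficients_closed_form_general a b hab M α hα xk xkm1 gkm1 coef hrep hx hg hsys φ l hl hφ
    Θ hΘ hinv
end

section
/- Let a < b, let n ≥ 2 and 2 ≤ k ≤ n, and let x_1, …, x_n, g_1, …, g_{n−1} : ℝ → ℝ be n times continuously differentiable on [a,b] with ẋ_r(t) = x_{r+1}(t) + g_r(t) on [a,b] for r = 1, …, n−1. Suppose x_k(t) = Σ_{j=1}^{M} a_j α_j(t) on [a,b] for continuous basis functions α_1, …, α_M and real coefficients a_1, …, a_M. Let φ_1, …, φ_M be modulating functions of order at least k on [a,b] with the M × M matrix Θ, Θ_{ij} = ∫_a^b φ_i(t) α_j(t) dt, invertible. Then (a_1, …, a_M)^T = Θ^{−1} Ψ, where Ψ_i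 = (−1)^{k−1} ∫_a^b φ_i^((k−1))(t) x_1(t) dt − Σ_{r=1}^{k−1} (−1)^{k−1−r} ∫_a^b φ_i^((k−1−r))(t) g_r(t) dt. -/
open Set intervalIntegral MeasureTheory

theorem ContDiffOn.hasDerivWithinAt_iteratedDerivWithin {𝕜 F : Type*}
    [NontriviallyNormedField 𝕜] [NormedAddCommGroup F] [NormedSpace 𝕜 F]
    {f : 𝕜 → F} {s : Set 𝕜} {n : WithTop ℕ∞} {m : ℕ} {x : 𝕜}
    (hf : ContDiffOn 𝕜 n f s) (hmn : m < n) (hs : UniqueDiffOn 𝕜 s) (hx : x ∈ s) :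
    HasDerivWithinAt (iteratedDerivWithin m f s) (iteratedDerivWithin (m + 1) f s x) s x := by
  rw [iteratedDerivWithin_succ]
  exact (hf.differentiableOn_iteratedDerivWithin hmn hs x hx).hasDerivWithinAt

section Modulation

variable {a b : ℝ}

theorem integral_mul_deriv_eq_neg_integral_deriv_mul_of_eq_zero (hab : a ≤ b)
    {u v u' v' : ℝ → ℝ}
    (hu : ∀ t ∈ Icc a b, HasDerivWithinAt u (u' t) (Icc a b) t)
    (hv : ∀ t ∈ Icc a b, HasDerivWithinAt v (v' t) (Icc a b) t)
    (hu' : IntervalIntegrable u' volume a b) (hv' : IntervalIntegrable v' volume a b)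
    (ha : u a = 0) (hb : u b = 0) :
    ∫ t in a..b, u t * v' t = -∫ t in a..b, u' t * v t := by
  rw [← uIcc_of_le hab] at hu hv
  rw [integral_mul_deriv_eq_deriv_mul_of_hasDerivWithinAt hu hv hu' hv', ha, hb]
  ring

theorem integral_mul_sum_eq_sum_mul_integral {ι : Type*} (s : Finset ι) {f : ℝ → ℝ}
    {α : ι → ℝ → ℝ} (c : ι → ℝ)
    (hα : ∀ j ∈ s, IntervalIntegrable (fun t => f t * α j t) volume a b) :
    ∫ t in a..b, f t * ∑ j ∈ s, c j * α j t =
      ∑ j ∈ s, c j * ∫ t in a..b, f t * α j t := by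
  simp_rw [Finset.mul_sum, mul_left_comm (f _)]
  rw [integral_finsetSum fun j hj => (hα j hj).const_mul (c j)]
  simp_rw [intervalIntegral.integral_const_mul]

variable {φ : ℝ → ℝ}

theorem integral_iteratedDerivWithin_mul_eq_of_hasDerivWithinAt (hab : a < b) {d : ℕ}
    (hφ : ContDiffOn ℝ (d + 1) φ (Icc a b))
    (ha : iteratedDerivWithin d φ (Icc a b) a = 0) (hb : iteratedDerivWithin d φ (Icc a b) b = 0)
    {y z w : ℝ → ℝ} (hy : ∀ t ∈ Icc a b, HasDerivWithinAt y (z t + w t) (Icc a b) t)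
    (hz : ContinuousOn z (Icc a b)) (hw : ContinuousOn w (Icc a b)) :
    ∫ t in a..b, iteratedDerivWithin d φ (Icc a b) t * z t =
      -(∫ t in a..b, iteratedDerivWithin (d + 1) φ (Icc a b) t * y t) -
        ∫ t in a..b, iteratedDerivWithin d φ (Icc a b) t * w t := by
  have hs : UniqueDiffOn ℝ (Icc a b) := uniqueDiffOn_Icc hab
  have hψ : ContinuousOn (iteratedDerivWithin d φ (Icc a b)) (Icc a b) :=
    hφ.continuousOn_iteratedDerivWithin (by norm_cast; omega) hs
  have hψ' : ContinuousOn (iteratedDerivWithin (d + 1) φ (Icc a b)) (Icc a b) :=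
    hφ.continuousOn_iteratedDerivWithin le_rfl hs
  have hibp := integral_mul_deriv_eq_neg_integral_deriv_mul_of_eq_zero hab.le
    (fun t ht => hφ.hasDerivWithinAt_iteratedDerivWithin (by norm_cast; omega) hs ht) hy
    (hψ'.intervalIntegrable_of_Icc hab.le) ((hz.add hw).intervalIntegrable_of_Icc hab.le) ha hb
  simp_rw [mul_add] at hibp
  rw [integral_add ((hψ.fun_mul hz).intervalIntegrable_of_Icc hab.le)
    ((hψ.fun_mul hw).intervalIntegrable_of_Icc hab.le)] at hibp
  linarith

theorem integral_mul_eq_of_triangular (hab : a < b) {k : ℕ}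
    (hφ : ContDiffOn ℝ k φ (Icc a b))
    (hφ0 : ∀ i < k, iteratedDerivWithin i φ (Icc a b) a = 0 ∧
      iteratedDerivWithin i φ (Icc a b) b = 0)
    {x g : ℕ → ℝ → ℝ}
    (hx : ∀ r, 1 ≤ r → r ≤ k → ContinuousOn (x (r + 1)) (Icc a b))
    (hg : ∀ r, 1 ≤ r → r ≤ k → ContinuousOn (g r) (Icc a b))
    (hsys : ∀ r, 1 ≤ r → r ≤ k → ∀ t ∈ Icc a b,
      HasDerivWithinAt (x r) (x (r + 1) t + g r t) (Icc a b) t) :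
    ∫ t in a..b, φ t * x (k + 1) t =
      (-1 : ℝ) ^ k * (∫ t in a..b, iteratedDerivWithin k φ (Icc a b) t * x 1 t) -
        ∑ r ∈ Finset.Icc 1 k, (-1 : ℝ) ^ (k - r) *
          ∫ t in a..b, iteratedDerivWithin (k - r) φ (Icc a b) t * g r t := by
  suffices H : ∀ d j, j + d = k → ∫ t in a..b, φ t * x (k + 1) t =
      (-1 : ℝ) ^ d * (∫ t in a..b, iteratedDerivWithin d φ (Icc a b) t * x (j + 1) t) -
        ∑ r ∈ Finset.Icc (j + 1) k, (-1 : ℝ) ^ (k - r) *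
          ∫ t in a..b, iteratedDerivWithin (k - r) φ (Icc a b) t * g r t from
    H k 0 (zero_add k)
  intro d
  induction d with
  | zero =>
    rintro j rfl
    simp
  | succ d ih =>
    intro j hjd
    have hstep := integral_iteratedDerivWithin_mul_eq_of_hasDerivWithinAt hab
      (hφ.of_le (by norm_cast; omega)) (hφ0 d (by omega)).1 (hφ0 d (by omega)).2
      (hsys (j + 1) (by omega) (by omega)) (hx (j + 1) (by omega) (by omega))
      (hg (j + 1) (by omega) (by omega))
    have hexp : k - (j + 1) = d := by omega
    rw [ih (j + 1) (by omega), hstep,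
      ← Finset.insert_Icc_add_one_left_eq_Icc (by omega : j + 1 ≤ k),
      Finset.sum_insert (by simp), hexp]
    ring

end Modulation

theorem state_coefficients_output_only_general
    (a b : ℝ) (hab : a < b) (n : ℕ)
    (k : ℕ) (hk2 : 2 ≤ k) (hkn : k ≤ n)
    (x g : ℕ → ℝ → ℝ)
    (hx : ∀ r, 1 ≤ r → r ≤ n → ContDiffOn ℝ n (x r) (Set.Icc a b))
    (hg : ∀ r, 1 ≤ r → r ≤ n - 1 → ContDiffOn ℝ n (g r) (Set.Icc a b))
    (hsys : ∀ r, 1 ≤ r → r ≤ n - 1 → ∀ t ∈ Set.Icc a b,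
      derivWithin (x r) (Set.Icc a b) t = x (r + 1) t + g r t)
    (M : ℕ) (α : Fin M → ℝ → ℝ) (hα : ∀ j, Continuous (α j))
    (coef : Fin M → ℝ)
    (hrep : ∀ t ∈ Set.Icc a b, x k t = ∑ j, coef j * α j t)
    (φ : Fin M → ℝ → ℝ) (l : Fin M → ℕ) (hl : ∀ i, k ≤ l i)
    (hφ : ∀ i, IsModulatingOn (φ i) (l i) a b)
    (Θ : Matrix (Fin M) (Fin M) ℝ)
    (hΘ : Θ = Matrix.of fun i j => ∫ t in a..b, φ i t * α j t)
    (hinv : IsUnit Θ) :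
    coef = Θ⁻¹.mulVec fun i =>
      (-1 : ℝ) ^ (k - 1) *
          (∫ t in a..b, iteratedDerivWithin (k - 1) (φ i) (Set.Icc a b) t * x 1 t)
        - ∑ r ∈ Finset.Icc 1 (k - 1), (-1 : ℝ) ^ (k - 1 - r) *
            ∫ t in a..b, iteratedDerivWithin (k - 1 - r) (φ i) (Set.Icc a b) t * g r t := by
  obtain ⟨m, rfl⟩ : ∃ m, k = m + 1 := ⟨k - 1, by omega⟩
  have hderiv : ∀ r, 1 ≤ r → r ≤ m → ∀ t ∈ Icc a b,
      HasDerivWithinAt (x r) (x (r + 1) t + g r t) (Icc a b) t := fun r hr1 hrm t ht => by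
    rw [← hsys r hr1 (by omega) t ht]
    exact ((hx r hr1 (by omega)).differentiableOn (by norm_cast; omega) t ht).hasDerivWithinAt
  have := hinv.invertible
  refine (Matrix.inv_mulVec_eq_vec (funext fun i => ?_)).symm
  obtain ⟨-, hφc, hφ0⟩ := hφ i
  have hml : m < l i := hl i
  have hφi : ContinuousOn (φ i) (uIcc a b) := (uIcc_of_le hab.le).symm ▸ hφc.continuousOn
  rw [Nat.add_sub_cancel,
    ← integral_mul_eq_of_triangular hab (hφc.of_le (by exact_mod_cast hml.le))
    (fun s hs => hφ0 s (hs.trans hml))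
    (fun r _ hr => (hx (r + 1) (by omega) (by omega)).continuousOn)
    (fun r hr1 hr => (hg r hr1 (by omega)).continuousOn) hderiv,
    integral_congr fun t ht => by rw [hrep t (uIcc_of_le hab.le ▸ ht)],
    integral_mul_sum_eq_sum_mul_integral _ _
      fun j _ => (hφi.mul (hα j).continuousOn).intervalIntegrable]
  simp [hΘ, Matrix.mulVec, dotProduct, mul_comm]

/-- output-only closed-form solution for the coefficients of the basis
decomposition of the state `x_k`, `(a_1,…,a_M)ᵀ = Θ⁻¹ Ψ`, with modulating functions of
order at least `k`. -/
theorem state_coefficients_output_only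
    (a b : ℝ) (hab : a < b) (n : ℕ) (hn : 2 ≤ n)
    (k : ℕ) (hk2 : 2 ≤ k) (hkn : k ≤ n)
    (x g : ℕ → ℝ → ℝ)
    (hx : ∀ r, 1 ≤ r → r ≤ n → ContDiffOn ℝ n (x r) (Set.Icc a b))
    (hg : ∀ r, 1 ≤ r → r ≤ n - 1 → ContDiffOn ℝ n (g r) (Set.Icc a b))
    (hsys : ∀ r, 1 ≤ r → r ≤ n - 1 → ∀ t ∈ Set.Icc a b,
      derivWithin (x r) (Set.Icc a b) t = x (r + 1) t + g r t)
    (M : ℕ) (hM : 1 ≤ M) (α : Fin M → ℝ → ℝ) (hα : ∀ j, Continuous (α j))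
    (coef : Fin M → ℝ)
    (hrep : ∀ t ∈ Set.Icc a b, x k t = ∑ j, coef j * α j t)
    (φ : Fin M → ℝ → ℝ) (l : Fin M → ℕ) (hl : ∀ i, k ≤ l i)
    (hφ : ∀ i, IsModulatingOn (φ i) (l i) a b)
    (Θ : Matrix (Fin M) (Fin M) ℝ)
    (hΘ : Θ = Matrix.of fun i j => ∫ t in a..b, φ i t * α j t)
    (hinv : IsUnit Θ) :
    coef = Θ⁻¹.mulVec fun i =>
      (-1 : ℝ) ^ (k - 1) *
          (∫ t in a..b, iteratedDerivWithin (k - 1) (φ i) (Set.Icc a b) t * x 1 t)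
        - ∑ r ∈ Finset.Icc 1 (k - 1), (-1 : ℝ) ^ (k - 1 - r) *
            ∫ t in a..b, iteratedDerivWithin (k - 1 - r) (φ i) (Set.Icc a b) t * g r t :=
  state_coefficients_output_only_general a b hab n k hk2 hkn x g hx hg hsys M α hα coef hrep φ l hl
    hφ Θ hΘ hinv
end

section
/- Let a < b, let n ≥ 2, and let x_1, …, x_n, g_1, …, g_n : ℝ → ℝ be n times continuously differentiable on [a,b] and d : ℝ → ℝ continuous, with ẋ_r(t) = x_{r+1}(t) + g_r(t) on [a,b] for r = 1, …, n−1 and ẋ_n(t) = g_n(t) + d(t) on [a,b]. Suppose d(t) = Σ_{j=1}^{N} b_j β_j(t) on [a,b] for continuous basis functions β_1, …, β_N and real coefficients b_1, …, b_N. Let φ_1, …, φ_N be modulating functions of order at least n on [a,b] with the N × N matrix Θ_d, (Θ_d)_{ij} = ∫_a^b φ_i(t) β_j(t) dt, invertible. Then (b_1, …, b_N)^T = Θ_d^{−1} w, where w_i = (−1)^n ∫_a^b φ_i^((n))(t) x_1(t) dt − Σ_{r=1}^{n} (−1)^{n−r} ∫_a^b φ_i^((n−r))(t) g_r(t) dt.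 -/
open Set MeasureTheory intervalIntegral

namespace IsModulatingOn

variable {φ : ℝ → ℝ} {L k : ℕ} {a b : ℝ}

theorem integral_iteratedDerivWithin_mul_derivWithin (hφ : IsModulatingOn φ L a b)
    (hab : a < b) (hk : k < L) {y : ℝ → ℝ} (hy : ContDiffOn ℝ 1 y (Icc a b)) :
    ∫ t in a..b, iteratedDerivWithin k φ (Icc a b) t * derivWithin y (Icc a b) t
      = -∫ t in a..b, iteratedDerivWithin (k + 1) φ (Icc a b) t * y t := by
  have hs : UniqueDiffOn ℝ (Icc a b) := uniqueDiffOn_Icc hab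
  have hkL : (k : WithTop ℕ∞) < L := by exact_mod_cast hk
  have huIcc : uIcc a b = Icc a b := uIcc_of_le hab.le
  have hparts := integral_mul_deriv_eq_deriv_mul_of_hasDerivWithinAt
    (u := iteratedDerivWithin k φ (Icc a b)) (u' := iteratedDerivWithin (k + 1) φ (Icc a b))
    (v := y) (v' := derivWithin y (Icc a b))
    (by
      rw [huIcc, iteratedDerivWithin_succ]
      exact fun t ht => (hφ.2.1.differentiableOn_iteratedDerivWithin hkL hs t ht).hasDerivWithinAt)
    (by
      rw [huIcc]
      exact fun t ht => (hy.differentiableOn one_ne_zero t ht).hasDerivWithinAt)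
    (ContinuousOn.intervalIntegrable <| by
      rw [huIcc]; exact hφ.2.1.continuousOn_iteratedDerivWithin (by exact_mod_cast hk) hs)
    (ContinuousOn.intervalIntegrable <| by
      rw [huIcc]; exact hy.continuousOn_derivWithin hs le_rfl)
  rw [hparts, (hφ.2.2 k hk).1, (hφ.2.2 k hk).2]
  ring

theorem integral_iteratedDerivWithin_mul_of_derivWithin_eq (hφ : IsModulatingOn φ L a b)
    (hab : a < b) (hk : k < L) {y z h : ℝ → ℝ} (hy : ContDiffOn ℝ 1 y (Icc a b))
    (hh : ContinuousOn h (Icc a b))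
    (hyz : ∀ t ∈ Icc a b, derivWithin y (Icc a b) t = z t + h t) :
    ∫ t in a..b, iteratedDerivWithin k φ (Icc a b) t * z t
      = -(∫ t in a..b, iteratedDerivWithin (k + 1) φ (Icc a b) t * y t)
        - ∫ t in a..b, iteratedDerivWithin k φ (Icc a b) t * h t := by
  have hs : UniqueDiffOn ℝ (Icc a b) := uniqueDiffOn_Icc hab
  have huIcc : uIcc a b = Icc a b := uIcc_of_le hab.le
  have hφk : ContinuousOn (iteratedDerivWithin k φ (Icc a b)) (Icc a b) :=
    hφ.2.1.continuousOn_iteratedDerivWithin (by exact_mod_cast hk.le) hs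
  have hint : ∀ f : ℝ → ℝ, ContinuousOn f (Icc a b) →
      IntervalIntegrable (fun t => iteratedDerivWithin k φ (Icc a b) t * f t) volume a b :=
    fun f hf => ContinuousOn.intervalIntegrable (by rw [huIcc]; exact hφk.mul hf)
  calc ∫ t in a..b, iteratedDerivWithin k φ (Icc a b) t * z t
      = ∫ t in a..b, (iteratedDerivWithin k φ (Icc a b) t * derivWithin y (Icc a b) t
          - iteratedDerivWithin k φ (Icc a b) t * h t) :=
        integral_congr fun t ht => by
          rw [huIcc] at ht
          simp only [hyz t ht]
          ring
    _ = _ := by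
      rw [integral_sub (hint _ (hy.continuousOn_derivWithin hs le_rfl)) (hint h hh),
        hφ.integral_iteratedDerivWithin_mul_derivWithin hab hk hy]

theorem integral_mul_eq_alternating_sum (hφ : IsModulatingOn φ L a b) (hab : a < b)
    {n : ℕ} (hnL : n ≤ L) {x g : ℕ → ℝ → ℝ}
    (hx : ∀ r, 1 ≤ r → r ≤ n → ContDiffOn ℝ 1 (x r) (Icc a b))
    (hg : ∀ r, 1 ≤ r → r ≤ n → ContinuousOn (g r) (Icc a b))
    (hchain : ∀ r, 1 ≤ r → r ≤ n → ∀ t ∈ Icc a b,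
      derivWithin (x r) (Icc a b) t = x (r + 1) t + g r t) :
    ∫ t in a..b, φ t * x (n + 1) t
      = (-1 : ℝ) ^ n * (∫ t in a..b, iteratedDerivWithin n φ (Icc a b) t * x 1 t)
        - ∑ r ∈ Finset.Icc 1 n, (-1 : ℝ) ^ (n - r) *
            ∫ t in a..b, iteratedDerivWithin (n - r) φ (Icc a b) t * g r t := by
  have key : ∀ m ≤ n, ∫ t in a..b, φ t * x (n + 1) t
      = (-1 : ℝ) ^ m * (∫ t in a..b, iteratedDerivWithin m φ (Icc a b) t * x (n + 1 - m) t)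
        - ∑ r ∈ Finset.Icc (n + 1 - m) n, (-1 : ℝ) ^ (n - r) *
            ∫ t in a..b, iteratedDerivWithin (n - r) φ (Icc a b) t * g r t := by
    intro m
    induction m with
    | zero =>
      intro _
      simp
    | succ m ih =>
      intro hm
      set r := n - m
      have hrn : n + 1 - m = r + 1 := by omega
      have hr' : n + 1 - (m + 1) = r := by omega
      have hmr : n - r = m := by omega
      have hIcc : Finset.Icc r n = insert r (Finset.Icc (r + 1) n) := by
        ext i; simp only [Finset.mem_Icc, Finset.mem_insert]; omega
      have hstep := hφ.integral_iteratedDerivWithin_mul_of_derivWithin_eq (k := m) hab (by omega)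
        (hx r (by omega) (by omega)) (hg r (by omega) (by omega))
        (hchain r (by omega) (by omega))
      rw [ih (by omega), hrn, hr', hIcc, Finset.sum_insert (by simp), hmr, hstep, pow_succ]
      ring
  simpa using key n le_rfl

end IsModulatingOn

theorem Matrix.of_integral_mul_mulVec {ι κ : Type*} [Fintype κ] {a b : ℝ}
    {φ : ι → ℝ → ℝ} {β : κ → ℝ → ℝ}
    (hint : ∀ i j, IntervalIntegrable (fun t => φ i t * β j t) volume a b) (c : κ → ℝ) :
    (Matrix.of fun i j => ∫ t in a..b, φ i t * β j t).mulVec c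
      = fun i => ∫ t in a..b, φ i t * ∑ j, c j * β j t := by
  funext i
  calc ∑ j, (∫ t in a..b, φ i t * β j t) * c j
      = ∑ j, ∫ t in a..b, φ i t * β j t * c j := by simp only [intervalIntegral.integral_mul_const]
    _ = ∫ t in a..b, ∑ j, φ i t * β j t * c j :=
        (integral_finsetSum fun j _ => (hint i j).mul_const (c j)).symm
    _ = ∫ t in a..b, φ i t * ∑ j, c j * β j t := by
        simp only [Finset.mul_sum, mul_comm (c _), mul_assoc]

theorem disturbance_coefficients_output_only_general
    (a b : ℝ) (hab : a < b) (n : ℕ) (hn : 2 ≤ n)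
    (x g : ℕ → ℝ → ℝ) (d : ℝ → ℝ)
    (hx : ∀ r, 1 ≤ r → r ≤ n → ContDiffOn ℝ n (x r) (Set.Icc a b))
    (hg : ∀ r, 1 ≤ r → r ≤ n → ContDiffOn ℝ n (g r) (Set.Icc a b))
    (hsys : ∀ r, 1 ≤ r → r ≤ n - 1 → ∀ t ∈ Set.Icc a b,
      derivWithin (x r) (Set.Icc a b) t = x (r + 1) t + g r t)
    (hlast : ∀ t ∈ Set.Icc a b,
      derivWithin (x n) (Set.Icc a b) t = g n t + d t)
    (N : ℕ) (β : Fin N → ℝ → ℝ) (hβ : ∀ j, Continuous (β j))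
    (coef : Fin N → ℝ)
    (hrep : ∀ t ∈ Set.Icc a b, d t = ∑ j, coef j * β j t)
    (φ : Fin N → ℝ → ℝ) (l : Fin N → ℕ) (hl : ∀ i, n ≤ l i)
    (hφ : ∀ i, IsModulatingOn (φ i) (l i) a b)
    (Θd : Matrix (Fin N) (Fin N) ℝ)
    (hΘd : Θd = Matrix.of fun i j => ∫ t in a..b, φ i t * β j t)
    (hinv : IsUnit Θd) :
    coef = Θd⁻¹.mulVec fun i =>
      (-1 : ℝ) ^ n * (∫ t in a..b, iteratedDerivWithin n (φ i) (Set.Icc a b) t * x 1 t)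
        - ∑ r ∈ Finset.Icc 1 n, (-1 : ℝ) ^ (n - r) *
            ∫ t in a..b, iteratedDerivWithin (n - r) (φ i) (Set.Icc a b) t * g r t := by
  -- the disturbance closes the chain as the state `x (n + 1)`
  set X := Function.update x (n + 1) d
  have hX : ∀ r ≤ n, X r = x r := fun r hr => Function.update_of_ne (by omega) _ _
  have hXtop : X (n + 1) = d := Function.update_self _ _ _
  have hchain : ∀ r, 1 ≤ r → r ≤ n → ∀ t ∈ Icc a b,
      derivWithin (X r) (Icc a b) t = X (r + 1) t + g r t := by
    intro r hr1 hrn t ht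
    rcases hrn.lt_or_eq with hrn | rfl
    · rw [hX r hrn.le, hX (r + 1) hrn, hsys r hr1 (by omega) t ht]
    · rw [hX r le_rfl, hXtop, hlast t ht, add_comm]
  have hXdiff : ∀ r, 1 ≤ r → r ≤ n → ContDiffOn ℝ 1 (X r) (Icc a b) := fun r hr1 hrn =>
    hX r hrn ▸ (hx r hr1 hrn).of_le (by exact_mod_cast (by omega : 1 ≤ n))
  let _ : Invertible Θd := hinv.invertible
  refine (Matrix.inv_mulVec_eq_vec ?_).symm
  rw [hΘd, Matrix.of_integral_mul_mulVec fun i j => ((hφ i).2.1.continuousOn.mul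
    (hβ j).continuousOn).intervalIntegrable_of_Icc hab.le]
  funext i
  rw [← hX 1 (by omega), ← (hφ i).integral_mul_eq_alternating_sum hab (hl i) hXdiff
    (fun r hr1 hrn => (hg r hr1 hrn).continuousOn) hchain, hXtop]
  exact integral_congr fun t ht => by rw [hrep t (uIcc_of_le hab.le ▸ ht)]

/-- output-only closed-form solution for the coefficients of the basis
decomposition of the disturbance, `(b_1,…,b_N)ᵀ = Θ_d⁻¹ w`, with modulating functions of
order at least `n`. -/
theorem disturbance_coefficients_output_only
    (a b : ℝ) (hab : a < b) (n : ℕ) (hn : 2 ≤ n)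
    (x g : ℕ → ℝ → ℝ) (d : ℝ → ℝ) (hd : Continuous d)
    (hx : ∀ r, 1 ≤ r → r ≤ n → ContDiffOn ℝ n (x r) (Set.Icc a b))
    (hg : ∀ r, 1 ≤ r → r ≤ n → ContDiffOn ℝ n (g r) (Set.Icc a b))
    (hsys : ∀ r, 1 ≤ r → r ≤ n - 1 → ∀ t ∈ Set.Icc a b,
      derivWithin (x r) (Set.Icc a b) t = x (r + 1) t + g r t)
    (hlast : ∀ t ∈ Set.Icc a b,
      derivWithin (x n) (Set.Icc a b) t = g n t + d t)
    (N : ℕ) (hN : 1 ≤ N) (β : Fin N → ℝ → ℝ) (hβ : ∀ j, Continuous (β j))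
    (coef : Fin N → ℝ)
    (hrep : ∀ t ∈ Set.Icc a b, d t = ∑ j, coef j * β j t)
    (φ : Fin N → ℝ → ℝ) (l : Fin N → ℕ) (hl : ∀ i, n ≤ l i)
    (hφ : ∀ i, IsModulatingOn (φ i) (l i) a b)
    (Θd : Matrix (Fin N) (Fin N) ℝ)
    (hΘd : Θd = Matrix.of fun i j => ∫ t in a..b, φ i t * β j t)
    (hinv : IsUnit Θd) :
    coef = Θd⁻¹.mulVec fun i =>
      (-1 : ℝ) ^ n * (∫ t in a..b, iteratedDerivWithin n (φ i) (Set.Icc a b) t * x 1 t)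
        - ∑ r ∈ Finset.Icc 1 n, (-1 : ℝ) ^ (n - r) *
            ∫ t in a..b, iteratedDerivWithin (n - r) (φ i) (Set.Icc a b) t * g r t :=
  disturbance_coefficients_output_only_general a b hab n hn x g d hx hg hsys hlast N β hβ coef hrep
    φ l hl hφ Θd hΘd hinv
end

section
/- Let a < b, let n ≥ 2, let x_1, …, x_n, g_1, …, g_n : ℝ → ℝ be n times continuously differentiable on [a,b] and d : ℝ → ℝ continuous, with ẋ_r(t) = x_{r+1}(t) + g_r(t) on [a,b] for r = 1, …, n−1 and ẋ_n(t) = g_n(t) + d(t) on [a,b], and let φ be a modulating function of order at least n on [a,b]. Then the two modulated expressions for the disturbance agree: −∫_a^b φ'(t) x_n(t) dt − ∫_a^b φ(t) g_n(t) dt = (−1)^n ∫_a^b φ^((n))(t) x_1(t) dt − Σ_{r=1}^{n} (−1)^{n−r} ∫_a^b φ^((n−r))(t) g_r(t) dt. -/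
open Set MeasureTheory intervalIntegral

section

variable {a b : ℝ}

theorem integral_mul_derivWithin_eq_neg_of_eq_zero (hab : a < b) {F u : ℝ → ℝ}
    (hF : ContDiffOn ℝ 1 F (Icc a b)) (hu : ContDiffOn ℝ 1 u (Icc a b))
    (hFa : F a = 0) (hFb : F b = 0) :
    ∫ t in a..b, F t * derivWithin u (Icc a b) t =
      -∫ t in a..b, derivWithin F (Icc a b) t * u t := by
  have hs : UniqueDiffOn ℝ (Icc a b) := uniqueDiffOn_Icc hab
  have huIcc : uIcc a b = Icc a b := uIcc_of_le hab.le
  have hasDeriv {f : ℝ → ℝ} (hf : ContDiffOn ℝ 1 f (Icc a b)) :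
      ∀ t ∈ uIcc a b, HasDerivWithinAt f (derivWithin f (Icc a b) t) (uIcc a b) t := by
    rw [huIcc]
    exact fun t ht ↦ ((hf.differentiableOn one_ne_zero) t ht).hasDerivWithinAt
  have integrable {f : ℝ → ℝ} (hf : ContDiffOn ℝ 1 f (Icc a b)) :
      IntervalIntegrable (derivWithin f (Icc a b)) volume a b :=
    (hf.continuousOn_derivWithin hs le_rfl).intervalIntegrable_of_Icc hab.le
  rw [integral_mul_deriv_eq_deriv_mul_of_hasDerivWithinAt (hasDeriv hF) (hasDeriv hu)
    (integrable hF) (integrable hu), hFa, hFb]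
  ring

theorem integral_iteratedDerivWithin_mul_eq_of_derivWithin_eq (hab : a < b) {φ y z w : ℝ → ℝ}
    {i : ℕ} (hφ : ContDiffOn ℝ (i + 1 : ℕ) φ (Icc a b))
    (hφa : iteratedDerivWithin i φ (Icc a b) a = 0)
    (hφb : iteratedDerivWithin i φ (Icc a b) b = 0)
    (hy : ContDiffOn ℝ 1 y (Icc a b)) (hw : ContinuousOn w (Icc a b))
    (hdy : EqOn (derivWithin y (Icc a b)) (z + w) (Icc a b)) :
    ∫ t in a..b, iteratedDerivWithin i φ (Icc a b) t * z t =
      -(∫ t in a..b, iteratedDerivWithin (i + 1) φ (Icc a b) t * y t)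
        - ∫ t in a..b, iteratedDerivWithin i φ (Icc a b) t * w t := by
  have hs : UniqueDiffOn ℝ (Icc a b) := uniqueDiffOn_Icc hab
  have huIcc : uIcc a b = Icc a b := uIcc_of_le hab.le
  have hφi : ContDiffOn ℝ 1 (iteratedDerivWithin i φ (Icc a b)) (Icc a b) :=
    ((contDiffOn_nat_succ_iff_contDiffOn_one_iteratedDerivWithin hs).1 hφ).2
  have hz : ContinuousOn z (Icc a b) :=
    ((hy.continuousOn_derivWithin hs le_rfl).sub hw).congr fun t ht ↦ by simp [hdy ht]
  have hibp := integral_mul_derivWithin_eq_neg_of_eq_zero hab hφi hy hφa hφb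
  rw [← iteratedDerivWithin_succ] at hibp
  have hsplit : ∫ t in a..b, iteratedDerivWithin i φ (Icc a b) t * derivWithin y (Icc a b) t =
      (∫ t in a..b, iteratedDerivWithin i φ (Icc a b) t * z t)
        + ∫ t in a..b, iteratedDerivWithin i φ (Icc a b) t * w t := by
    rw [← intervalIntegral.integral_add]
    · refine integral_congr fun t ht ↦ ?_
      simp [hdy (huIcc ▸ ht), mul_add]
    all_goals exact ((hφi.continuousOn.mul ‹_›).mono huIcc.subset).intervalIntegrable
  linarith

theorem modulated_output_eq_modulated_state (hab : a < b) {n : ℕ} {x g : ℕ → ℝ → ℝ} {φ : ℝ → ℝ}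
    (hx : ∀ r, 1 ≤ r → r ≤ n → ContDiffOn ℝ 1 (x r) (Icc a b))
    (hg : ∀ r, 1 ≤ r → r ≤ n → ContinuousOn (g r) (Icc a b))
    (hsys : ∀ r, 1 ≤ r → r < n → EqOn (derivWithin (x r) (Icc a b)) (x (r + 1) + g r) (Icc a b))
    (hφ : ContDiffOn ℝ n φ (Icc a b))
    (hφ0 : ∀ i < n, iteratedDerivWithin i φ (Icc a b) a = 0 ∧
      iteratedDerivWithin i φ (Icc a b) b = 0)
    (k : ℕ) (hk : 1 ≤ k) (hkn : k ≤ n) :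
    (-1 : ℝ) ^ n * (∫ t in a..b, iteratedDerivWithin n φ (Icc a b) t * x 1 t)
        - ∑ r ∈ Finset.Icc 1 n, (-1 : ℝ) ^ (n - r) *
            ∫ t in a..b, iteratedDerivWithin (n - r) φ (Icc a b) t * g r t =
      (-1 : ℝ) ^ (n - k + 1) *
          (∫ t in a..b, iteratedDerivWithin (n - k + 1) φ (Icc a b) t * x k t)
        - ∑ r ∈ Finset.Icc k n, (-1 : ℝ) ^ (n - r) *
            ∫ t in a..b, iteratedDerivWithin (n - r) φ (Icc a b) t * g r t := by
  induction k, hk using Nat.le_induction with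
  | base => rw [Nat.sub_add_cancel hkn]
  | succ k hk ih =>
    have hsucc : n - (k + 1) + 1 = n - k := by omega
    have hstep := integral_iteratedDerivWithin_mul_eq_of_derivWithin_eq hab
      (hφ.of_le (by exact_mod_cast (by omega : n - k + 1 ≤ n)))
      (hφ0 _ (by omega)).1 (hφ0 _ (by omega)).2 (hx k hk (by omega)) (hg k hk (by omega))
      (hsys k hk (by omega))
    rw [ih (by omega), ← Finset.insert_Icc_add_one_left_eq_Icc (by omega),
      Finset.sum_insert (by simp), hsucc, hstep, pow_succ]
    ring

end

theorem one_step_eq_output_only_disturbance_general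
    (a b : ℝ) (hab : a < b) (n : ℕ) (hn : 2 ≤ n)
    (x g : ℕ → ℝ → ℝ)
    (hx : ∀ r, 1 ≤ r → r ≤ n → ContDiffOn ℝ n (x r) (Set.Icc a b))
    (hg : ∀ r, 1 ≤ r → r ≤ n → ContDiffOn ℝ n (g r) (Set.Icc a b))
    (hsys : ∀ r, 1 ≤ r → r ≤ n - 1 → ∀ t ∈ Set.Icc a b,
      derivWithin (x r) (Set.Icc a b) t = x (r + 1) t + g r t)
    (φ : ℝ → ℝ) (l : ℕ) (hl : n ≤ l) (hφ : IsModulatingOn φ l a b) :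
    -(∫ t in a..b, derivWithin φ (Set.Icc a b) t * x n t)
        - ∫ t in a..b, φ t * g n t =
      (-1 : ℝ) ^ n *
          (∫ t in a..b, iteratedDerivWithin n φ (Set.Icc a b) t * x 1 t)
        - ∑ r ∈ Finset.Icc 1 n, (-1 : ℝ) ^ (n - r) *
            ∫ t in a..b, iteratedDerivWithin (n - r) φ (Set.Icc a b) t * g r t := by
  obtain ⟨-, hφ, hφ0⟩ := hφ
  have hchain := modulated_output_eq_modulated_state hab
    (fun r h1 h2 ↦ (hx r h1 h2).of_le (by exact_mod_cast (by omega : 1 ≤ n)))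
    (fun r h1 h2 ↦ (hg r h1 h2).continuousOn)
    (fun r h1 h2 t ht ↦ hsys r h1 (by omega) t ht) (hφ.of_le (by exact_mod_cast hl))
    (fun i hi ↦ hφ0 i (by omega)) n (by omega) le_rfl
  rw [hchain, Finset.Icc_self, Finset.sum_singleton]
  simp only [Nat.sub_self, zero_add, pow_one, pow_zero, iteratedDerivWithin_one,
    iteratedDerivWithin_zero]
  ring

/-- the one-step and the output-only modulated expressions for the
disturbance of the triangular system coincide. -/
theorem one_step_eq_output_only_disturbance
    (a b : ℝ) (hab : a < b) (n : ℕ) (hn : 2 ≤ n)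
    (x g : ℕ → ℝ → ℝ) (d : ℝ → ℝ) (hd : Continuous d)
    (hx : ∀ r, 1 ≤ r → r ≤ n → ContDiffOn ℝ n (x r) (Set.Icc a b))
    (hg : ∀ r, 1 ≤ r → r ≤ n → ContDiffOn ℝ n (g r) (Set.Icc a b))
    (hsys : ∀ r, 1 ≤ r → r ≤ n - 1 → ∀ t ∈ Set.Icc a b,
      derivWithin (x r) (Set.Icc a b) t = x (r + 1) t + g r t)
    (hlast : ∀ t ∈ Set.Icc a b,
      derivWithin (x n) (Set.Icc a b) t = g n t + d t)
    (φ : ℝ → ℝ) (l : ℕ) (hl : n ≤ l) (hφ : IsModulatingOn φ l a b) :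
    -(∫ t in a..b, derivWithin φ (Set.Icc a b) t * x n t)
        - ∫ t in a..b, φ t * g n t =
      (-1 : ℝ) ^ n *
          (∫ t in a..b, iteratedDerivWithin n φ (Set.Icc a b) t * x 1 t)
        - ∑ r ∈ Finset.Icc 1 n, (-1 : ℝ) ^ (n - r) *
            ∫ t in a..b, iteratedDerivWithin (n - r) φ (Set.Icc a b) t * g r t :=
  one_step_eq_output_only_disturbance_general a b hab n hn x g hx hg hsys φ l hl hφ
end
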